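/- arXiv:2102.11782 — 6 statements merged into one kernel-verified Lean document; each statement's English description precedes it below -/
import Mathlib

section
/- Let R ⊆ (Fin k → Bool) be a Boolean relation that is essentially positive but not strictly essentially positive, and that is neither 0-valid nor 1-valid. Then the equality relation is definable from R by variable identification and existential quantification: there exists a map σ : Fin k → Fin 4 such that for all a, b : Bool, a = b holds if and only if there exist t, f : Bool with the assignment (fun i => ![a, b, t, f] (σ i)) belonging to R. -/
/-- `R` is 0-valid if the constant-false tuple belongs to it. -/
def ZeroValid {k : ℕ} (R : Set (Fin k → Bool)) : Prop := (fun _ => false) ∈ R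

/-- `R` is 1-valid if the constant-true tuple belongs to it. -/
def OneValid {k : ℕ} (R : Set (Fin k → Bool)) : Prop := (fun _ => true) ∈ R

/-- `R` is essentially positive: definable by negative unit literals,
equalities, and positive clauses. -/
def EssPos {k : ℕ} (R : Set (Fin k → Bool)) : Prop :=
  ∃ (N : Finset (Fin k)) (E : Finset (Fin k × Fin k)) (P : Finset (Finset (Fin k))),
    (∀ C ∈ P, C.Nonempty) ∧
    ∀ m : Fin k → Bool, m ∈ R ↔
      ((∀ i ∈ N, m i = false) ∧ (∀ p ∈ E, m p.1 = m p.2) ∧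
        (∀ C ∈ P, ∃ i ∈ C, m i = true))

/-- `R` is strictly essentially positive: definable by negative unit literals
and positive clauses only (no equalities). -/
def StrictEssPos {k : ℕ} (R : Set (Fin k → Bool)) : Prop :=
  ∃ (N : Finset (Fin k)) (P : Finset (Finset (Fin k))),
    (∀ C ∈ P, C.Nonempty) ∧
    ∀ m : Fin k → Bool, m ∈ R ↔
      ((∀ i ∈ N, m i = false) ∧ (∀ C ∈ P, ∃ i ∈ C, m i = true))

/-!
Close the equalities `E` of a representation `(N, E, P)` of `R` into an equivalence relation. A
class meeting `N` is forced false; a class is forced true when some clause of `P` has all its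
not-forced-false variables inside it. If every nontrivial class is forced false or forced true,
the equalities are consequences of unit literals and singleton clauses, so `R` is strictly
essentially positive. Otherwise take `i ≠ j` in a nontrivial class that is neither: put `a` at `i`,
`b` on the rest of the class, `false` on forced-false variables and `true` elsewhere. Every clause
is then satisfied outside the class, so the tuple lies in `R` exactly when `a = b`.
-/

open Relation

section PositiveSystem

variable {k : ℕ} (N : Finset (Fin k)) (E : Finset (Fin k × Fin k)) (P : Finset (Finset (Fin k)))

def PosSat (m : Fin k → Bool) : Prop :=
  (∀ i ∈ N, m i = false) ∧ (∀ p ∈ E, m p.1 = m p.2) ∧ (∀ C ∈ P, ∃ i ∈ C, m i = true)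

def Linked : Fin k → Fin k → Prop := EqvGen fun i j => (i, j) ∈ E

def ForcedFalse (i : Fin k) : Prop := ∃ n ∈ N, Linked E i n

def ForcedTrue (i : Fin k) : Prop :=
  ¬ ForcedFalse N E i ∧ ∃ C ∈ P, ∀ j ∈ C, ¬ ForcedFalse N E j → Linked E j i

def IsEqualityWitness (i j : Fin k) : Prop :=
  Linked E i j ∧ i ≠ j ∧ ¬ ForcedFalse N E i ∧
    ∀ C ∈ P, ∃ x ∈ C, ¬ ForcedFalse N E x ∧ ¬ Linked E x i

variable {N E P}

theorem Linked.symm {i j : Fin k} (h : Linked E i j) : Linked E j i := EqvGen.symm _ _ h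

theorem Linked.trans {i j l : Fin k} (hij : Linked E i j) (hjl : Linked E j l) : Linked E i l :=
  EqvGen.trans _ _ _ hij hjl

theorem ForcedFalse.of_linked {i j : Fin k} (hij : Linked E i j) (hj : ForcedFalse N E j) :
    ForcedFalse N E i :=
  let ⟨n, hn, hjn⟩ := hj
  ⟨n, hn, hij.trans hjn⟩

theorem forcedFalse_of_mem {i : Fin k} (hi : i ∈ N) : ForcedFalse N E i :=
  ⟨i, hi, EqvGen.refl i⟩

theorem PosSat.eq_of_linked {m : Fin k → Bool} (hm : PosSat N E P m) {i j : Fin k}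
    (h : Linked E i j) : m i = m j :=
  Setoid.eqvGen_le (s := Setoid.ker m) (fun x y hxy => hm.2.1 (x, y) hxy) h

theorem PosSat.eq_false_of_forcedFalse {m : Fin k → Bool} (hm : PosSat N E P m) {i : Fin k}
    (hi : ForcedFalse N E i) : m i = false :=
  let ⟨n, hn, hin⟩ := hi
  (hm.eq_of_linked hin).trans (hm.1 n hn)

theorem PosSat.eq_true_of_forcedTrue {m : Fin k → Bool} (hm : PosSat N E P m) {i : Fin k}
    (hi : ForcedTrue N E P i) : m i = true := by
  obtain ⟨-, C, hC, hCi⟩ := hi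
  obtain ⟨j, hj, hmj⟩ := hm.2.2 C hC
  have hj_free : ¬ ForcedFalse N E j := fun h => by simp [hm.eq_false_of_forcedFalse h] at hmj
  rw [← hm.eq_of_linked (hCi j hj hj_free), hmj]

theorem ForcedTrue.of_not_isEqualityWitness {i j : Fin k} (h : ¬ IsEqualityWitness N E P i j)
    (hij : Linked E i j) (hne : i ≠ j) (hi : ¬ ForcedFalse N E i) : ForcedTrue N E P i := by
  simp only [IsEqualityWitness, not_and, not_forall, not_exists, not_not] at h
  obtain ⟨C, hC, hCi⟩ := h hij hne hi
  exact ⟨hi, C, hC, hCi⟩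

theorem posSat_iff_of_forall_not_isEqualityWitness
    (h : ∀ i j, ¬ IsEqualityWitness N E P i j) (m : Fin k → Bool) :
    PosSat N E P m ↔ (∀ i, ForcedFalse N E i → m i = false) ∧
      (∀ C ∈ P, ∃ i ∈ C, m i = true) ∧ ∀ i, ForcedTrue N E P i → m i = true := by
  refine ⟨fun hm => ⟨fun i => hm.eq_false_of_forcedFalse, hm.2.2,
    fun i => hm.eq_true_of_forcedTrue⟩, fun ⟨hF, hP, hT⟩ => ?_⟩
  refine ⟨fun i hi => hF i (forcedFalse_of_mem hi), ?_, hP⟩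
  rintro ⟨i, j⟩ hE
  have hij : Linked E i j := EqvGen.rel _ _ hE
  by_cases hne : i = j
  · rw [hne]
  by_cases hi : ForcedFalse N E i
  · rw [hF i hi, hF j (hi.of_linked hij.symm)]
  have hj : ¬ ForcedFalse N E j := fun hj => hi (hj.of_linked hij)
  rw [hT i (.of_not_isEqualityWitness (h i j) hij hne hi),
    hT j (.of_not_isEqualityWitness (h j i) hij.symm (Ne.symm hne) hj)]

theorem strictEssPos_of_forall_not_isEqualityWitness (hP : ∀ C ∈ P, C.Nonempty)
    (h : ∀ i j, ¬ IsEqualityWitness N E P i j) : StrictEssPos {m | PosSat N E P m} := by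
  classical
  refine ⟨({i | ForcedFalse N E i} : Finset _),
    P ∪ ({i | ForcedTrue N E P i} : Finset _).image singleton, ?_, fun m => ?_⟩
  · simp only [Finset.mem_union, Finset.mem_image]
    rintro C (hC | ⟨i, -, rfl⟩)
    exacts [hP C hC, Finset.singleton_nonempty i]
  · simp [posSat_iff_of_forall_not_isEqualityWitness h, or_imp, forall_and]

open Classical in
theorem posSat_of_clauses_avoid {i : Fin k}
    (hP : ∀ C ∈ P, ∃ x ∈ C, ¬ ForcedFalse N E x ∧ ¬ Linked E x i) (a : Bool) :
    PosSat N E P fun x =>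
      if ForcedFalse N E x then false else if Linked E x i then a else true := by
  refine ⟨fun x hx => if_pos (forcedFalse_of_mem hx), ?_, fun C hC => ?_⟩
  · rintro ⟨x, y⟩ hE
    have hxy : Linked E x y := EqvGen.rel _ _ hE
    have hF : ForcedFalse N E x ↔ ForcedFalse N E y := ⟨.of_linked hxy.symm, .of_linked hxy⟩
    have hL : Linked E x i ↔ Linked E y i := ⟨hxy.symm.trans, hxy.trans⟩
    simp only [hF, hL]
  · obtain ⟨x, hx, hxF, hxL⟩ := hP C hC
    exact ⟨x, hx, by simp [hxF, hxL]⟩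

theorem exists_eq_iff_posSat_of_isEqualityWitness {i j : Fin k}
    (h : IsEqualityWitness N E P i j) :
    ∃ σ : Fin k → Fin 4, ∀ a b : Bool,
      (a = b ↔ ∃ t f : Bool, PosSat N E P fun x => ![a, b, t, f] (σ x)) := by
  classical
  obtain ⟨hij, hne, hi, hP⟩ := h
  have hj : ¬ ForcedFalse N E j := fun hj => hi (hj.of_linked hij)
  refine ⟨fun x => if ForcedFalse N E x then 3 else if x = i then 0
    else if Linked E x i then 1 else 2, fun a b => ⟨?_, ?_⟩⟩
  · rintro rfl
    refine ⟨true, false, ?_⟩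
    convert posSat_of_clauses_avoid hP a using 2 with x
    obtain rfl | hx := eq_or_ne x i
    · simp [hi, Linked, EqvGen.refl]
    · split_ifs <;> simp_all
  · rintro ⟨t, f, hm⟩
    simpa [hi, hj, Ne.symm hne, hij.symm] using hm.eq_of_linked hij

end PositiveSystem

theorem stmt_3_general {k : ℕ} (R : Set (Fin k → Bool))
    (hep : EssPos R) (hnsep : ¬ StrictEssPos R) :
    ∃ σ : Fin k → Fin 4, ∀ a b : Bool,
      (a = b ↔ ∃ t f : Bool, (fun i => ![a, b, t, f] (σ i)) ∈ R) := by
  obtain ⟨N, E, P, hP, hR⟩ := hep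
  obtain rfl : R = {m | PosSat N E P m} := Set.ext hR
  by_cases hw : ∃ i j, IsEqualityWitness N E P i j
  · obtain ⟨i, j, hij⟩ := hw
    exact exists_eq_iff_posSat_of_isEqualityWitness hij
  · push Not at hw
    exact absurd (strictEssPos_of_forall_not_isEqualityWitness hP hw) hnsep

/-- Equality is definable from such an `R` by variable identification and
existential quantification. -/
theorem stmt_3 {k : ℕ} (R : Set (Fin k → Bool))
    (hep : EssPos R) (hnsep : ¬ StrictEssPos R)
    (h0 : ¬ ZeroValid R) (h1 : ¬ OneValid R) :
    ∃ σ : Fin k → Fin 4, ∀ a b : Bool,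
      (a = b ↔ ∃ t f : Bool, (fun i => ![a, b, t, f] (σ i)) ∈ R) :=
  stmt_3_general R hep hnsep
end

section
/- Let Φ be a consistent set of terms over V and let l be a literal. Then Φ ⊨ l if and only if some term t ∈ Φ contains l. -/
/-- A literal over `V`: `Sum.inl x` is the positive literal `x`,
`Sum.inr x` is the negative literal `¬x`. -/
abbrev Lit (V : Type) := V ⊕ V

/-- A term is a finite set of literals. -/
abbrev Term (V : Type) := Finset (Lit V)

/-- An assignment satisfies a literal. -/
def satLit {V : Type} (σ : V → Bool) : Lit V → Prop
  | Sum.inl x => σ x = true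
  | Sum.inr x => σ x = false

/-- An assignment satisfies a term if it satisfies every literal in it. -/
def satTerm {V : Type} (σ : V → Bool) (t : Term V) : Prop := ∀ l ∈ t, satLit σ l

/-- A set of terms is consistent if some assignment satisfies all of its members. -/
def ConsistentT {V : Type} (Φ : Set (Term V)) : Prop := ∃ σ, ∀ t ∈ Φ, satTerm σ t

/-- `Φ ⊨ l`: every assignment satisfying all terms of `Φ` satisfies `l`. -/
def EntailsLit {V : Type} (Φ : Set (Term V)) (l : Lit V) : Prop :=
  ∀ σ, (∀ t ∈ Φ, satTerm σ t) → satLit σ l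

def falsify {V : Type} [DecidableEq V] (σ : V → Bool) : Lit V → V → Bool
  | Sum.inl x => Function.update σ x false
  | Sum.inr x => Function.update σ x true

section Falsify

variable {V : Type} [DecidableEq V] (σ : V → Bool)

theorem not_satLit_falsify (l : Lit V) : ¬ satLit (falsify σ l) l := by
  cases l <;> simp [falsify, satLit]

theorem satLit_falsify_of_ne {l l' : Lit V} (h : satLit σ l') (hne : l' ≠ l) :
    satLit (falsify σ l) l' := by
  cases l <;> cases l' <;> simp_all [falsify, satLit, Function.update_apply]

theorem satTerm_falsify_of_notMem {l : Lit V} {t : Term V} (h : satTerm σ t) (hl : l ∉ t) :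
    satTerm (falsify σ l) t := fun l' hl' =>
  satLit_falsify_of_ne σ (h l' hl') (ne_of_mem_of_not_mem hl' hl)

end Falsify

theorem entailsLit_of_mem {V : Type} {Φ : Set (Term V)} {l : Lit V} {t : Term V}
    (ht : t ∈ Φ) (hl : l ∈ t) : EntailsLit Φ l :=
  fun _ hσ => hσ t ht l hl

/-- A consistent set of terms entails a literal iff some of its terms contains it. -/
theorem stmt_4 {V : Type} (Φ : Set (Term V)) (l : Lit V) (hcons : ConsistentT Φ) :
    EntailsLit Φ l ↔ ∃ t ∈ Φ, l ∈ t := by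
  classical
  refine ⟨fun hent => ?_, fun ⟨t, ht, hl⟩ => entailsLit_of_mem ht hl⟩
  by_contra! hnotMem
  obtain ⟨σ, hσ⟩ := hcons
  exact not_satLit_falsify σ l
    (hent _ fun t ht => satTerm_falsify_of_notMem σ (hσ t ht) (hnotMem t ht))
end

section
/- Let Φ be a set of terms over V. If every subset of Φ of cardinality at most 2 is consistent (in particular, every term and every pair of terms of Φ is consistent), then Φ is consistent. Contrapositively, if Φ is inconsistent then it contains an inconsistent subset of cardinality at most 2. -/
variable {V : Type}

open Classical in
noncomputable def positiveAssignment (Φ : Set (Term V)) (x : V) : Bool :=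
  decide (∃ t ∈ Φ, Sum.inl x ∈ t)

theorem ConsistentT.inl_notMem_of_inr_mem {t t' : Term V} {x : V}
    (h : ConsistentT ({t, t'} : Set (Term V))) (hx : Sum.inr x ∈ t) : Sum.inl x ∉ t' := by
  intro hx'
  obtain ⟨σ, hσ⟩ := h
  have hfalse : σ x = false := hσ t (by simp) _ hx
  have htrue : σ x = true := hσ t' (by simp) _ hx'
  simp [hfalse] at htrue

theorem satTerm_positiveAssignment {Φ : Set (Term V)}
    (hΦ : ∀ t ∈ Φ, ∀ t' ∈ Φ, ConsistentT ({t, t'} : Set (Term V))) {t : Term V} (ht : t ∈ Φ) :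
    satTerm (positiveAssignment Φ) t := by
  rintro (x | x) hx
  · simpa [satLit, positiveAssignment] using ⟨t, ht, hx⟩
  · simpa [satLit, positiveAssignment] using
      fun t' ht' => (hΦ t ht t' ht').inl_notMem_of_inr_mem hx

theorem consistentT_of_forall_pair {Φ : Set (Term V)}
    (hΦ : ∀ t ∈ Φ, ∀ t' ∈ Φ, ConsistentT ({t, t'} : Set (Term V))) : ConsistentT Φ :=
  ⟨positiveAssignment Φ, fun _ ht => satTerm_positiveAssignment hΦ ht⟩

theorem consistentT_of_finset_card_le_two {Φ : Set (Term V)}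
    (hΦ : ∀ S : Finset (Term V), (↑S : Set (Term V)) ⊆ Φ → S.card ≤ 2 →
      ConsistentT (↑S : Set (Term V))) : ConsistentT Φ := by
  classical
  refine consistentT_of_forall_pair fun t ht t' ht' => ?_
  simpa using hΦ {t, t'} (by simp [Set.insert_subset_iff, ht, ht'])
    ((Finset.card_insert_le _ _).trans (by simp))

/-- If every subset of `Φ` of cardinality at most 2 is consistent, then `Φ` is
consistent; contrapositively, an inconsistent `Φ` contains an inconsistent
subset of cardinality at most 2. -/
theorem stmt_6 {V : Type} (Φ : Set (Term V)) :
    ((∀ S : Finset (Term V), (↑S : Set (Term V)) ⊆ Φ → S.card ≤ 2 →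
        ConsistentT (↑S : Set (Term V))) → ConsistentT Φ) ∧
    (¬ ConsistentT Φ → ∃ S : Finset (Term V), (↑S : Set (Term V)) ⊆ Φ ∧
        S.card ≤ 2 ∧ ¬ ConsistentT (↑S : Set (Term V))) := by
  refine ⟨consistentT_of_finset_card_le_two, fun hΦ => ?_⟩
  by_contra! hS
  exact hΦ (consistentT_of_finset_card_le_two hS)
end

section
/- Let r ≥ 1, let Φ be a consistent finite set of r-formulas over V, and let a be an atom (a literal or a positive clause of width at most r) with Φ ⊨ a. Then there exists a subset E ⊆ Φ with |E| ≤ r and E ⊨ a. -/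
/-- An `r`-formula: a finite set of literals together with a finite set of
positive clauses (each clause a finite set of variables). -/
abbrev RForm (V : Type) := Finset (Lit V) × Finset (Finset V)

/-- An atom: a literal or a positive clause. -/
abbrev Atom (V : Type) := Lit V ⊕ Finset V

/-- An assignment satisfies a positive clause if it makes some variable of it true. -/
def satClause {V : Type} (σ : V → Bool) (C : Finset V) : Prop := ∃ x ∈ C, σ x = true

/-- An assignment satisfies an `r`-formula if it satisfies all of its literals
and all of its positive clauses. -/
def satForm {V : Type} (σ : V → Bool) (φ : RForm V) : Prop :=
  (∀ l ∈ φ.1, satLit σ l) ∧ (∀ C ∈ φ.2, satClause σ C)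

/-- All positive clauses of the formula are nonempty and of width at most `r`. -/
def IsRForm {V : Type} (r : ℕ) (φ : RForm V) : Prop :=
  ∀ C ∈ φ.2, C.Nonempty ∧ C.card ≤ r

/-- An assignment satisfies an atom. -/
def satAtom {V : Type} (σ : V → Bool) : Atom V → Prop
  | Sum.inl l => satLit σ l
  | Sum.inr C => satClause σ C

/-- The atom is a literal, or a nonempty positive clause of width at most `r`. -/
def IsRAtom {V : Type} (r : ℕ) : Atom V → Prop
  | Sum.inl _ => True
  | Sum.inr C => C.Nonempty ∧ C.card ≤ r

/-- A set of `r`-formulas is consistent if some assignment satisfies all members. -/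
def ConsistentF {V : Type} (Φ : Set (RForm V)) : Prop := ∃ σ, ∀ φ ∈ Φ, satForm σ φ

/-- `Φ ⊨ a`: every assignment satisfying all members of `Φ` satisfies the atom `a`. -/
def EntailsA {V : Type} (Φ : Set (RForm V)) (a : Atom V) : Prop :=
  ∀ σ, (∀ φ ∈ Φ, satForm σ φ) → satAtom σ a

/-!
Fix a model `σ₀` of `Φ`; it makes every variable negated in `Φ` false. A negative literal `¬x`
entailed by `Φ` must occur in `Φ`, since otherwise switching `x` on in `σ₀` keeps a model of `Φ`.
For a clause `C` (and a positive literal `x`, read as the clause `{x}`), the assignment that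
is false exactly on `C` and on the negated variables is not a model of `Φ`. The formula it violates
either contains a positive literal from `C`, or has a clause `D` meeting `C` whose other variables
are all negated in `Φ`; that formula together with one formula negating each variable of `D \ C`
entails `C`, and there are at most `1 + |D \ C| ≤ |D| ≤ r` of them.
-/

theorem Finset.exists_subset_card_le_forall_exists {α β : Type*} [DecidableEq β] {S : Finset α}
    {T : Finset β} {P : α → β → Prop} (h : ∀ a ∈ S, ∃ b ∈ T, P a b) :
    ∃ U ⊆ T, U.card ≤ S.card ∧ ∀ a ∈ S, ∃ b ∈ U, P a b := by
  choose f hfT hfP using h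
  refine ⟨S.attach.image fun a => f a.1 a.2, ?_, ?_, ?_⟩
  · exact Finset.image_subset_iff.2 fun a _ => hfT a.1 a.2
  · exact Finset.card_image_le.trans Finset.card_attach.le
  · exact fun a ha => ⟨f a ha, Finset.mem_image_of_mem _ (Finset.mem_attach _ ⟨a, ha⟩), hfP a ha⟩

section

variable {V : Type}

def IsNegated (Φ : Finset (RForm V)) (v : V) : Prop := ∃ φ ∈ Φ, Sum.inr v ∈ φ.1

theorem IsNegated.eq_false {Φ : Finset (RForm V)} {σ : V → Bool} (hσ : ∀ φ ∈ Φ, satForm σ φ)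
    {v : V} (h : IsNegated Φ v) : σ v = false := by
  obtain ⟨φ, hφ, hv⟩ := h
  exact (hσ φ hφ).1 _ hv

theorem satForm.mono {σ τ : V → Bool} {φ : RForm V} (h : satForm σ φ)
    (hle : ∀ v, σ v = true → τ v = true) (hneg : ∀ v, Sum.inr v ∈ φ.1 → τ v = false) :
    satForm τ φ := by
  refine ⟨fun l hl => ?_, fun D hD => ?_⟩
  · rcases l with v | v
    · exact hle v (h.1 _ hl)
    · exact hneg v hl
  · obtain ⟨w, hwD, hw⟩ := h.2 D hD
    exact ⟨w, hwD, hle w hw⟩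

theorem entailsA_pos_iff_singleton {Φ : Set (RForm V)} {x : V} :
    EntailsA Φ (Sum.inl (Sum.inl x)) ↔ EntailsA Φ (Sum.inr {x}) := by
  simp [EntailsA, satAtom, satLit, satClause]

theorem entailsA_of_mem_lits {E : Set (RForm V)} {φ : RForm V} (hφ : φ ∈ E) {l : Lit V}
    (hl : l ∈ φ.1) : EntailsA E (Sum.inl l) :=
  fun _ hσ => (hσ φ hφ).1 l hl

theorem entailsA_clause_of_mem_clauses [DecidableEq V] {E : Set (RForm V)} {φ : RForm V}
    (hφ : φ ∈ E) {D C : Finset V} (hD : D ∈ φ.2)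
    (hneg : ∀ y ∈ D \ C, ∃ ψ ∈ E, Sum.inr y ∈ ψ.1) :
    EntailsA E (Sum.inr C) := by
  intro σ hσ
  obtain ⟨w, hwD, hw⟩ := (hσ φ hφ).2 D hD
  by_contra hC
  have hwC : w ∉ C := fun hwC => hC ⟨w, hwC, hw⟩
  obtain ⟨ψ, hψ, hwψ⟩ := hneg w (Finset.mem_sdiff.2 ⟨hwD, hwC⟩)
  have hw' : σ w = false := (hσ ψ hψ).1 _ hwψ
  simp [hw] at hw'

theorem isNegated_of_entailsA_neg {Φ : Finset (RForm V)}
    (hcons : ConsistentF (↑Φ : Set (RForm V))) {x : V}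
    (hent : EntailsA (↑Φ : Set (RForm V)) (Sum.inl (Sum.inr x))) : IsNegated Φ x := by
  classical
  obtain ⟨σ₀, hσ₀⟩ := hcons
  by_contra hx
  have hsat : ∀ φ ∈ Φ, satForm (Function.update σ₀ x true) φ := by
    refine fun φ hφ => (hσ₀ φ hφ).mono (fun v hv => ?_) (fun v hv => ?_)
    · by_cases hvx : v = x
      · simp [hvx]
      · simpa [hvx] using hv
    · have hvx : v ≠ x := fun hvx => hx ⟨φ, hφ, hvx ▸ hv⟩
      simpa [hvx] using IsNegated.eq_false hσ₀ ⟨φ, hφ, hv⟩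
  simpa [satAtom, satLit] using hent _ hsat

theorem exists_witness_of_entailsA_clause [DecidableEq V] {Φ : Finset (RForm V)}
    (hcons : ConsistentF (↑Φ : Set (RForm V))) {C : Finset V}
    (hent : EntailsA (↑Φ : Set (RForm V)) (Sum.inr C)) :
    (∃ φ ∈ Φ, ∃ y ∈ C, Sum.inl y ∈ φ.1) ∨
      ∃ φ ∈ Φ, ∃ D ∈ φ.2, (D ∩ C).Nonempty ∧ ∀ y ∈ D \ C, IsNegated Φ y := by
  classical
  obtain ⟨σ₀, hσ₀⟩ := hcons
  by_contra! h
  obtain ⟨hpos, hclause⟩ := h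
  let σ : V → Bool := fun v => decide (v ∉ C ∧ ¬IsNegated Φ v)
  have hσ : ∀ v, σ v = true ↔ v ∉ C ∧ ¬IsNegated Φ v := fun v => decide_eq_true_iff
  have hsat : ∀ φ ∈ Φ, satForm σ φ := by
    intro φ hφ
    refine ⟨fun l hl => ?_, fun D hD => ?_⟩
    · rcases l with y | y
      · refine (hσ y).2 ⟨fun hyC => hpos φ hφ y hyC hl, fun hy => ?_⟩
        have hy' : σ₀ y = true := (hσ₀ φ hφ).1 _ hl
        simp [hy.eq_false hσ₀] at hy'
      · exact Bool.eq_false_iff.2 fun hy => ((hσ y).1 hy).2 ⟨φ, hφ, hl⟩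
    · obtain ⟨w, hwD, hw⟩ := (hσ₀ φ hφ).2 D hD
      have hwneg : ¬IsNegated Φ w := fun h => by simp [h.eq_false hσ₀] at hw
      by_cases hwC : w ∈ C
      · obtain ⟨y, hy, hyneg⟩ := hclause φ hφ D hD ⟨w, Finset.mem_inter.2 ⟨hwD, hwC⟩⟩
        exact ⟨y, (Finset.mem_sdiff.1 hy).1, (hσ y).2 ⟨(Finset.mem_sdiff.1 hy).2, hyneg⟩⟩
      · exact ⟨w, hwD, (hσ w).2 ⟨hwC, hwneg⟩⟩
  obtain ⟨x, hxC, hx⟩ := hent σ hsat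
  exact ((hσ x).1 hx).1 hxC

theorem exists_small_subset_entailsA_clause {r : ℕ} (hr : 1 ≤ r) {Φ : Finset (RForm V)}
    (hΦ : ∀ φ ∈ Φ, IsRForm r φ) (hcons : ConsistentF (↑Φ : Set (RForm V))) {C : Finset V}
    (hent : EntailsA (↑Φ : Set (RForm V)) (Sum.inr C)) :
    ∃ E ⊆ Φ, E.card ≤ r ∧ EntailsA (↑E : Set (RForm V)) (Sum.inr C) := by
  classical
  rcases exists_witness_of_entailsA_clause hcons hent with
    ⟨φ, hφ, y, hyC, hy⟩ | ⟨φ, hφ, D, hD, hDC, hneg⟩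
  · refine ⟨{φ}, Finset.singleton_subset_iff.2 hφ, by simpa using hr, fun σ hσ => ?_⟩
    exact ⟨y, hyC, entailsA_of_mem_lits (Finset.mem_singleton_self φ) hy σ hσ⟩
  · obtain ⟨U, hUΦ, hUcard, hU⟩ := Finset.exists_subset_card_le_forall_exists hneg
    refine ⟨insert φ U, Finset.insert_subset hφ hUΦ, ?_, ?_⟩
    · have hsdiff : (D \ C).card < D.card := by
        rw [← Finset.sdiff_inter_self_left]
        exact Finset.card_lt_card (Finset.sdiff_ssubset Finset.inter_subset_left hDC)
      calc (insert φ U).card ≤ U.card + 1 := Finset.card_insert_le φ U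
        _ ≤ D.card := by omega
        _ ≤ r := (hΦ φ hφ D hD).2
    · refine entailsA_clause_of_mem_clauses (by simp) hD fun y hy => ?_
      obtain ⟨ψ, hψ, hyψ⟩ := hU y hy
      exact ⟨ψ, by simp [hψ], hyψ⟩

end

theorem stmt_8_general {V : Type} (r : ℕ) (hr : 1 ≤ r) (Φ : Finset (RForm V))
    (hΦ : ∀ φ ∈ Φ, IsRForm r φ) (hcons : ConsistentF (↑Φ : Set (RForm V)))
    (a : Atom V) (hent : EntailsA (↑Φ : Set (RForm V)) a) :
    ∃ E : Finset (RForm V), E ⊆ Φ ∧ E.card ≤ r ∧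
      EntailsA (↑E : Set (RForm V)) a := by
  rcases a with (x | x) | C
  · simp only [entailsA_pos_iff_singleton] at hent ⊢
    exact exists_small_subset_entailsA_clause hr hΦ hcons hent
  · obtain ⟨φ, hφ, hx⟩ := isNegated_of_entailsA_neg hcons hent
    refine ⟨{φ}, Finset.singleton_subset_iff.2 hφ, by simpa using hr, ?_⟩
    exact entailsA_of_mem_lits (Finset.mem_singleton_self φ) hx
  · exact exists_small_subset_entailsA_clause hr hΦ hcons hent

/-- If a consistent finite set `Φ` of `r`-formulas entails an atom `a`, then some
subset of `Φ` of cardinality at most `r` already entails `a`. -/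
theorem stmt_8 {V : Type} (r : ℕ) (hr : 1 ≤ r) (Φ : Finset (RForm V))
    (hΦ : ∀ φ ∈ Φ, IsRForm r φ) (hcons : ConsistentF (↑Φ : Set (RForm V)))
    (a : Atom V) (ha : IsRAtom r a) (hent : EntailsA (↑Φ : Set (RForm V)) a) :
    ∃ E : Finset (RForm V), E ⊆ Φ ∧ E.card ≤ r ∧
      EntailsA (↑E : Set (RForm V)) a :=
  stmt_8_general r hr Φ hΦ hcons a hent
end

section
/- Let r ≥ 1 and let Φ be a finite set of r-formulas over V. If every subset of Φ of cardinality at most r + 1 is consistent, then Φ is consistent. Contrapositively, if Φ is inconsistent then it contains an inconsistent subset of cardinality at most r + 1. -/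
/-! Set every variable true unless some member of `Φ` contains its negation. This
assignment satisfies all negative literals by construction. A positive literal `x` of `φ` can
only fail if some `ψ` contains `¬x`, and then the pair `{φ, ψ}` is inconsistent. A positive
clause `C` of `φ` can only fail if every `x ∈ C` is negated by some `ψₓ`, and then `φ` together
with the at most `r` formulas `ψₓ` is inconsistent. -/

namespace RForm

variable {V : Type}

open Classical in
noncomputable def canonicalAssignment (Φ : Set (RForm V)) (x : V) : Bool :=
  decide (¬ ∃ ψ ∈ Φ, Sum.inr x ∈ ψ.1)

theorem canonicalAssignment_eq_false_iff {Φ : Set (RForm V)} {x : V} :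
    canonicalAssignment Φ x = false ↔ ∃ ψ ∈ Φ, Sum.inr x ∈ ψ.1 := by
  simp [canonicalAssignment]

theorem satLit_canonicalAssignment {Φ : Set (RForm V)}
    (hpair : ∀ φ ∈ Φ, ∀ ψ ∈ Φ, ConsistentF {φ, ψ}) {φ : RForm V} (hφ : φ ∈ Φ)
    {l : Lit V} (hl : l ∈ φ.1) : satLit (canonicalAssignment Φ) l := by
  cases l with
  | inl x =>
    show canonicalAssignment Φ x = true
    by_contra hx
    obtain ⟨ψ, hψ, hψx⟩ := canonicalAssignment_eq_false_iff.mp (Bool.eq_false_iff.mpr hx)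
    obtain ⟨τ, hτ⟩ := hpair φ hφ ψ hψ
    have hpos : τ x = true := (hτ φ (by simp)).1 (Sum.inl x) hl
    have hneg : τ x = false := (hτ ψ (by simp)).1 (Sum.inr x) hψx
    simp [hpos] at hneg
  | inr x => exact canonicalAssignment_eq_false_iff.mpr ⟨φ, hφ, hl⟩

theorem satClause_canonicalAssignment {Φ : Set (RForm V)} {r : ℕ}
    (hsmall : ∀ S : Finset (RForm V), ↑S ⊆ Φ → S.card ≤ r + 1 →
      ConsistentF (↑S : Set (RForm V)))
    {φ : RForm V} (hφ : φ ∈ Φ) {C : Finset V} (hC : C ∈ φ.2) (hCr : C.card ≤ r) :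
    satClause (canonicalAssignment Φ) C := by
  classical
  by_contra hunsat
  have hneg : ∀ x ∈ C, ∃ ψ ∈ Φ, Sum.inr x ∈ ψ.1 := fun x hx =>
    canonicalAssignment_eq_false_iff.mp (Bool.eq_false_iff.mpr fun h => hunsat ⟨x, hx, h⟩)
  choose! witness hwitnessΦ hwitness_neg using hneg
  set S := insert φ (C.image witness)
  have hSΦ : ↑S ⊆ Φ := by
    simp only [S, Finset.coe_insert, Finset.coe_image]
    exact Set.insert_subset hφ (Set.image_subset_iff.mpr hwitnessΦ)
  have hScard : S.card ≤ r + 1 :=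
    (Finset.card_insert_le _ _).trans (Nat.succ_le_succ (Finset.card_image_le.trans hCr))
  obtain ⟨τ, hτ⟩ := hsmall S hSΦ hScard
  obtain ⟨x, hx, hτx⟩ := (hτ φ (by simp [S])).2 C hC
  have hτx' : τ x = false :=
    (hτ (witness x) (by simpa [S] using Or.inr ⟨x, hx, rfl⟩)).1 _ (hwitness_neg x hx)
  simp [hτx] at hτx'

theorem consistentF_of_forall_card_le {Φ : Set (RForm V)} {r : ℕ} (hr : 1 ≤ r)
    (hwidth : ∀ φ ∈ Φ, ∀ C ∈ φ.2, C.card ≤ r)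
    (hsmall : ∀ S : Finset (RForm V), ↑S ⊆ Φ → S.card ≤ r + 1 →
      ConsistentF (↑S : Set (RForm V))) :
    ConsistentF Φ := by
  classical
  have hpair : ∀ φ ∈ Φ, ∀ ψ ∈ Φ, ConsistentF {φ, ψ} := fun φ hφ ψ hψ => by
    have h := hsmall {φ, ψ} (by simp [Set.insert_subset_iff, hφ, hψ])
      ((Finset.card_le_two).trans (by omega))
    simpa using h
  exact ⟨canonicalAssignment Φ, fun φ hφ =>
    ⟨fun _ hl => satLit_canonicalAssignment hpair hφ hl,
     fun _ hC => satClause_canonicalAssignment hsmall hφ hC (hwidth φ hφ _ hC)⟩⟩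

end RForm

/-- If every subset of `Φ` of cardinality at most `r + 1` is consistent, then
`Φ` is consistent; contrapositively, an inconsistent `Φ` contains an
inconsistent subset of cardinality at most `r + 1`. -/
theorem stmt_10 {V : Type} (r : ℕ) (hr : 1 ≤ r) (Φ : Finset (RForm V))
    (hΦ : ∀ φ ∈ Φ, IsRForm r φ) :
    ((∀ S : Finset (RForm V), S ⊆ Φ → S.card ≤ r + 1 →
        ConsistentF (↑S : Set (RForm V))) → ConsistentF (↑Φ : Set (RForm V))) ∧
    (¬ ConsistentF (↑Φ : Set (RForm V)) →
      ∃ S : Finset (RForm V), S ⊆ Φ ∧ S.card ≤ r + 1 ∧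
        ¬ ConsistentF (↑S : Set (RForm V))) := by
  have hconsistent : (∀ S : Finset (RForm V), S ⊆ Φ → S.card ≤ r + 1 →
      ConsistentF (↑S : Set (RForm V))) → ConsistentF (↑Φ : Set (RForm V)) := fun hsmall =>
    RForm.consistentF_of_forall_card_le hr (fun φ hφ C hC => (hΦ φ hφ C hC).2)
      fun S hS => hsmall S (Finset.coe_subset.mp hS)
  refine ⟨hconsistent, fun hΦinc => ?_⟩
  by_contra! hsmall
  exact hΦinc (hconsistent hsmall)
end

section
/- Let V be a finite type, let k ∈ ℕ, and let φ be a formula over V with the property that if φ is satisfiable then φ has a model of weight at most k. Consider the variable type V ⊕ Fin (k+1) with k + 1 fresh variables, and the formula ψ over V ⊕ Fin (k+1) satisfied by an assignment τ if and only if φ is satisfied by τ ∘ inl and τ(inr j) = true for at least one j ∈ Fin (k+1) (i.e., ψ = φ ∧ (x_1 ∨ … ∨ x_{k+1}) for fresh variables x_1, …, x_{k+1}). Then φ is satisfiable if and only if ψ has a model of weight exactly k + 1. -/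
/-!
A model of `φ` of weight `w ≤ k` is padded with `k + 1 - w ≥ 1` true fresh variables; conversely
any model of `ψ` restricts to a model of `φ`.
-/

def weight {W : Type} [Fintype W] (σ : W → Bool) : ℕ :=
  (Finset.univ.filter fun v => σ v = true).card

section Weight

variable {V W : Type} [Fintype V] [Fintype W]

lemma weight_eq_card_subtype (σ : W → Bool) :
    weight σ = Fintype.card {v // σ v = true} := by
  rw [weight, Fintype.card_subtype]

lemma weight_sum_elim (σ : V → Bool) (ρ : W → Bool) :
    weight (Sum.elim σ ρ) = weight σ + weight ρ := by
  simp only [weight_eq_card_subtype]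
  rw [Fintype.card_congr (Equiv.subtypeSum (p := fun x => Sum.elim σ ρ x = true)),
    Fintype.card_sum]
  rfl

lemma exists_eq_true_of_weight_pos {ρ : W → Bool} (h : 0 < weight ρ) : ∃ v, ρ v = true := by
  obtain ⟨v, hv⟩ := Finset.card_pos.mp h
  exact ⟨v, (Finset.mem_filter.mp hv).2⟩

lemma exists_weight_eq {m : ℕ} (hm : m ≤ Fintype.card W) : ∃ ρ : W → Bool, weight ρ = m := by
  classical
  obtain ⟨s, -, hs⟩ := Finset.exists_subset_card_eq (s := Finset.univ) hm
  refine ⟨fun v => decide (v ∈ s), ?_⟩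
  simp [weight, hs]

end Weight

/-- If a satisfiable `φ` always has a model of weight at most `k`, then `φ` is
satisfiable iff `φ ∧ (x_1 ∨ … ∨ x_{k+1})`, with `k + 1` fresh variables, has a
model of weight exactly `k + 1`. -/
theorem stmt_15 {V : Type} [Fintype V] (k : ℕ) (φ : (V → Bool) → Prop)
    (hφ : (∃ σ, φ σ) → ∃ σ, φ σ ∧ weight σ ≤ k) :
    (∃ σ, φ σ) ↔
    ∃ τ : (V ⊕ Fin (k + 1)) → Bool,
      (φ (τ ∘ Sum.inl) ∧ ∃ j : Fin (k + 1), τ (Sum.inr j) = true) ∧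
      weight τ = k + 1 := by
  constructor
  · intro hsat
    obtain ⟨σ, hσ, hσk⟩ := hφ hsat
    obtain ⟨ρ, hρ⟩ : ∃ ρ : Fin (k + 1) → Bool, weight ρ = k + 1 - weight σ :=
      exists_weight_eq (by simp)
    refine ⟨Sum.elim σ ρ, ⟨hσ, exists_eq_true_of_weight_pos (ρ := ρ) (by omega)⟩, ?_⟩
    rw [weight_sum_elim, hρ]
    omega
  · rintro ⟨τ, ⟨hτ, -⟩, -⟩
    exact ⟨_, hτ⟩
end
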